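/- arXiv:2112.10401 — 2 statements merged into one kernel-verified Lean document; each statement's English description precedes it below -/
import Mathlib

section
/- For any sequence of nested designs X_n = {x_1, ..., x_n} (given by a sequence of points x_1, x_2, ... in X) in a compact set X ⊂ ℝ^d with positive Lebesgue volume, one has limsup_{n→∞} MR(X_n) ≥ 2. In particular, the uniformity constant sup_n MR(X_n) of any point sequence in X is at least 2. -/
open Metric Set MeasureTheory

/-- Distance from a point `x` to the nearest point of the design `D`. -/
noncomputable def minDist {E : Type*} [NormedAddCommGroup E] (D : Finset E) (x : E) : ℝ :=
  sInf ((fun p => dist x p) '' (D : Set E))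

/-- Fill distance (covering radius) of the design `D` for the set `A`:
`CR_A(D) = sup_{x ∈ A} min_{p ∈ D} ‖x - p‖`. -/
noncomputable def fillDist {E : Type*} [NormedAddCommGroup E] (A : Set E) (D : Finset E) : ℝ :=
  sSup ((fun x => minDist D x) '' A)

/-- Separation radius of the design `D`:
`SR(D) = (1/2) min_{p ≠ q ∈ D} ‖p - q‖`. -/
noncomputable def sepRad {E : Type*} [NormedAddCommGroup E] (D : Finset E) : ℝ :=
  (1 / 2) * sInf ((fun p : E × E => dist p.1 p.2) '' {p | p.1 ∈ D ∧ p.2 ∈ D ∧ p.1 ≠ p.2})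

/-- Mesh-ratio of the design `D` for the set `A`: `MR(D) = CR_A(D) / SR(D)`. -/
noncomputable def meshRatio {E : Type*} [NormedAddCommGroup E] (A : Set E) (D : Finset E) : ℝ :=
  fillDist A D / sepRad D

/-- The nested design consisting of the first `n` points of the sequence `x`. -/
noncomputable def design {E : Type*} (x : ℕ → E) (n : ℕ) : Finset E :=
  letI := Classical.decEq E
  (Finset.range n).image x

/-!
The point `x n` added at step `n + 1` lies within `CR(Xₙ)` of `Xₙ`, so `SR(Xₙ₊₁) ≤ CR(Xₙ) / 2`.
If `MR(Xₙ) ≤ r < 2` for all large `n`, then `CR(Xₙ₊₁) ≤ r · SR(Xₙ₊₁) ≤ (r / 2) · CR(Xₙ)`, so the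
fill distance decays geometrically and `n · CR(Xₙ)^d → 0`. But the `n` balls of radius `CR(Xₙ)`
around the design cover `X`, so `vol(X) ≤ n · CR(Xₙ)^d · vol(B(0, 1))`, contradicting `vol(X) > 0`.
-/

open Filter Topology

section Radii

variable {E : Type*} [NormedAddCommGroup E] {A : Set E} {D : Finset E}

lemma minDist_le_dist {p : E} (hp : p ∈ D) (y : E) : minDist D y ≤ dist y p :=
  csInf_le ((D : Set E).toFinite.image _).bddBelow ⟨p, hp, rfl⟩

lemma exists_mem_minDist_eq (hD : D.Nonempty) (y : E) : ∃ p ∈ D, minDist D y = dist y p := by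
  obtain ⟨p, hp, hpy⟩ :=
    (hD.to_set.image fun p => dist y p).csInf_mem ((D : Set E).toFinite.image _)
  exact ⟨p, hp, hpy.symm⟩

lemma minDist_nonneg (y : E) : 0 ≤ minDist D y :=
  Real.sInf_nonneg (by rintro _ ⟨p, -, rfl⟩; exact dist_nonneg)

lemma fillDist_nonneg : 0 ≤ fillDist A D :=
  Real.sSup_nonneg (by rintro _ ⟨y, -, rfl⟩; exact minDist_nonneg y)

lemma minDist_le_fillDist (hA : Bornology.IsBounded A) (hD : D.Nonempty) {y : E} (hy : y ∈ A) :
    minDist D y ≤ fillDist A D := by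
  obtain ⟨p, hp⟩ := hD
  obtain ⟨R, hR⟩ := hA.subset_closedBall p
  refine le_csSup ⟨R, ?_⟩ ⟨y, hy, rfl⟩
  rintro _ ⟨z, hz, rfl⟩
  exact (minDist_le_dist hp z).trans (mem_closedBall.1 (hR hz))

lemma exists_mem_dist_le_fillDist (hA : Bornology.IsBounded A) (hD : D.Nonempty) {y : E}
    (hy : y ∈ A) : ∃ p ∈ D, dist y p ≤ fillDist A D := by
  obtain ⟨p, hp, hpy⟩ := exists_mem_minDist_eq hD y
  exact ⟨p, hp, hpy ▸ minDist_le_fillDist hA hD hy⟩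

lemma subset_biUnion_closedBall_fillDist (hA : Bornology.IsBounded A) (hD : D.Nonempty) :
    A ⊆ ⋃ p ∈ D, closedBall p (fillDist A D) := fun y hy => by
  obtain ⟨p, hp, hyp⟩ := exists_mem_dist_le_fillDist hA hD hy
  exact mem_biUnion hp (mem_closedBall.2 hyp)

lemma sepRad_nonneg : 0 ≤ sepRad D :=
  mul_nonneg (by norm_num) (Real.sInf_nonneg (by rintro _ ⟨_, -, rfl⟩; exact dist_nonneg))

lemma sepRad_le_half_dist {p q : E} (hp : p ∈ D) (hq : q ∈ D) (hpq : p ≠ q) :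
    sepRad D ≤ dist p q / 2 := by
  have : sInf ((fun p : E × E => dist p.1 p.2) '' {p | p.1 ∈ D ∧ p.2 ∈ D ∧ p.1 ≠ p.2})
      ≤ dist p q :=
    csInf_le ⟨0, by rintro _ ⟨_, -, rfl⟩; exact dist_nonneg⟩ ⟨(p, q), ⟨hp, hq, hpq⟩, rfl⟩
  rw [sepRad]
  linarith

lemma sepRad_pos {p q : E} (hp : p ∈ D) (hq : q ∈ D) (hpq : p ≠ q) : 0 < sepRad D := by
  have hfin : {p : E × E | p.1 ∈ D ∧ p.2 ∈ D ∧ p.1 ≠ p.2}.Finite :=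
    (D.finite_toSet.prod D.finite_toSet).subset fun _ h => ⟨h.1, h.2.1⟩
  have hne : {p : E × E | p.1 ∈ D ∧ p.2 ∈ D ∧ p.1 ≠ p.2}.Nonempty := ⟨(p, q), hp, hq, hpq⟩
  obtain ⟨⟨u, v⟩, ⟨-, -, huv⟩, hmin⟩ :=
    (hne.image fun p : E × E => dist p.1 p.2).csInf_mem (hfin.image _)
  rw [sepRad, ← hmin]
  exact mul_pos (by norm_num) (dist_pos.2 huv)

lemma meshRatio_nonneg : 0 ≤ meshRatio A D :=
  div_nonneg fillDist_nonneg sepRad_nonneg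

lemma sepRad_insert_le [DecidableEq E] (hA : Bornology.IsBounded A) (hD : D.Nonempty) {y : E}
    (hy : y ∈ A) (hyD : y ∉ D) : sepRad (insert y D) ≤ fillDist A D / 2 := by
  obtain ⟨p, hp, hyp⟩ := exists_mem_dist_le_fillDist hA hD hy
  have hne : y ≠ p := fun h => hyD (h ▸ hp)
  calc sepRad (insert y D) ≤ dist y p / 2 :=
        sepRad_le_half_dist (D.mem_insert_self y) (D.mem_insert_of_mem hp) hne
    _ ≤ fillDist A D / 2 := by linarith

end Radii

section Volume

variable {E : Type*} [NormedAddCommGroup E] [NormedSpace ℝ E] [FiniteDimensional ℝ E]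
  [MeasurableSpace E] [BorelSpace E] (μ : Measure E) [μ.IsAddHaarMeasure]

lemma measure_le_ofReal_card_mul_fillDist_pow {A : Set E} (hA : Bornology.IsBounded A)
    {D : Finset E} (hD : D.Nonempty) :
    μ A ≤ ENNReal.ofReal (D.card * fillDist A D ^ Module.finrank ℝ E) * μ (ball 0 1) := by
  calc μ A ≤ ∑ p ∈ D, μ (closedBall p (fillDist A D)) :=
        (measure_mono (subset_biUnion_closedBall_fillDist hA hD)).trans
          (measure_biUnion_finset_le _ _)
    _ = ENNReal.ofReal (D.card * fillDist A D ^ Module.finrank ℝ E) * μ (ball 0 1) := by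
      simp only [Measure.addHaar_closedBall μ _ fillDist_nonneg, Finset.sum_const, nsmul_eq_mul,
        ENNReal.ofReal_mul (Nat.cast_nonneg _), ENNReal.ofReal_natCast, mul_assoc]

end Volume

section Design

variable {E : Type*} {x : ℕ → E}

lemma mem_design {p : E} {n : ℕ} : p ∈ design x n ↔ ∃ i < n, x i = p := by
  simp [design]

lemma design_nonempty {n : ℕ} (hn : n ≠ 0) : (design x n).Nonempty :=
  ⟨x 0, mem_design.2 ⟨0, Nat.pos_of_ne_zero hn, rfl⟩⟩

lemma design_succ [DecidableEq E] (n : ℕ) : design x (n + 1) = insert (x n) (design x n) := by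
  ext p
  simp only [mem_design, Finset.mem_insert, Nat.lt_succ_iff_lt_or_eq]
  grind

lemma card_design (hinj : Function.Injective x) (n : ℕ) : (design x n).card = n :=
  letI := Classical.decEq E
  (Finset.card_image_of_injective _ hinj).trans (Finset.card_range n)

lemma notMem_design_self (hinj : Function.Injective x) (n : ℕ) : x n ∉ design x n := by
  rintro h
  obtain ⟨i, hi, hxi⟩ := mem_design.1 h
  exact hi.ne (hinj hxi)

end Design

lemma tendsto_natCast_mul_pow_of_le_mul {c : ℕ → ℝ} {q : ℝ} {N d : ℕ} (hq₀ : 0 ≤ q) (hq₁ : q < 1)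
    (hd : d ≠ 0) (hc : ∀ n ≥ N, 0 ≤ c n) (hdecay : ∀ n ≥ N, c (n + 1) ≤ q * c n) :
    Tendsto (fun n : ℕ => (n : ℝ) * c n ^ d) atTop (𝓝 0) := by
  rw [← tendsto_add_atTop_iff_nat N]
  have hgeom (k : ℕ) : c (k + N) ≤ q ^ k * c N := by
    simpa [add_comm] using le_geom (u := fun k => c (N + k)) hq₀ k fun j _ => by
      simpa [add_assoc] using hdecay (N + j) (by omega)
  have hs₀ : 0 ≤ q ^ d := pow_nonneg hq₀ d
  have hs₁ : q ^ d < 1 := pow_lt_one₀ hq₀ hq₁ hd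
  have hbound : Tendsto (fun k : ℕ => ((k : ℝ) * (q ^ d) ^ k + N * (q ^ d) ^ k) * c N ^ d)
      atTop (𝓝 0) := by
    simpa using ((tendsto_self_mul_const_pow_of_lt_one hs₀ hs₁).add
      ((tendsto_pow_atTop_nhds_zero_of_lt_one hs₀ hs₁).const_mul (N : ℝ))).mul_const (c N ^ d)
  refine squeeze_zero (fun k => ?_) (fun k => ?_) hbound
  · exact mul_nonneg (Nat.cast_nonneg _) (pow_nonneg (hc _ (by omega)) d)
  · calc ((k + N : ℕ) : ℝ) * c (k + N) ^ d ≤ ((k + N : ℕ) : ℝ) * (q ^ k * c N) ^ d := by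
          gcongr
          exacts [hc _ (by omega), hgeom k]
      _ = ((k : ℝ) * (q ^ d) ^ k + N * (q ^ d) ^ k) * c N ^ d := by
          push_cast
          ring

section MeshRatio

variable {E : Type*} [NormedAddCommGroup E] {S : Set E} {x : ℕ → E}

lemma fillDist_design_succ_le (hS : Bornology.IsBounded S) (hinj : Function.Injective x)
    (hmem : ∀ n, x n ∈ S) {n : ℕ} (hn : n ≠ 0) {r : ℝ} (hr : 0 ≤ r)
    (hmesh : meshRatio S (design x (n + 1)) ≤ r) :
    fillDist S (design x (n + 1)) ≤ r / 2 * fillDist S (design x n) := by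
  classical
  have hsep : sepRad (design x (n + 1)) ≤ fillDist S (design x n) / 2 := by
    rw [design_succ]
    exact sepRad_insert_le hS (design_nonempty hn) (hmem n) (notMem_design_self hinj n)
  have hsep_pos : 0 < sepRad (design x (n + 1)) :=
    sepRad_pos (mem_design.2 ⟨0, by omega, rfl⟩) (mem_design.2 ⟨n, by omega, rfl⟩)
      (hinj.ne (Ne.symm hn))
  calc fillDist S (design x (n + 1)) ≤ r * sepRad (design x (n + 1)) :=
        (div_le_iff₀ hsep_pos).1 hmesh
    _ ≤ r * (fillDist S (design x n) / 2) := by gcongr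
    _ = r / 2 * fillDist S (design x n) := by ring

variable [NormedSpace ℝ E] [FiniteDimensional ℝ E] [MeasurableSpace E] [BorelSpace E]

lemma not_tendsto_natCast_mul_fillDist_design_pow (hS : IsCompact S)
    (hvol : 0 < (Measure.addHaar : Measure E) S) (hinj : Function.Injective x) :
    ¬ Tendsto (fun n : ℕ => (n : ℝ) * fillDist S (design x n) ^ Module.finrank ℝ E)
      atTop (𝓝 0) := by
  intro hlim
  have hball : (Measure.addHaar : Measure E) (ball 0 1) ≠ ⊤ := measure_ball_lt_top.ne
  have hvol_le (n : ℕ) (hn : n ≠ 0) : (Measure.addHaar : Measure E) S ≤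
      ENNReal.ofReal (n * fillDist S (design x n) ^ Module.finrank ℝ E) *
        (Measure.addHaar : Measure E) (ball 0 1) := by
    have := measure_le_ofReal_card_mul_fillDist_pow Measure.addHaar hS.isBounded
      (design_nonempty (x := x) hn)
    rwa [card_design hinj] at this
  have hzero := ENNReal.Tendsto.mul_const (ENNReal.tendsto_ofReal hlim) (Or.inr hball)
  rw [ENNReal.ofReal_zero, zero_mul] at hzero
  exact hvol.ne' (le_antisymm
    (ge_of_tendsto hzero ((eventually_ne_atTop 0).mono hvol_le)) bot_le)

lemma frequently_lt_meshRatio_design (hS : IsCompact S)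
    (hvol : 0 < (Measure.addHaar : Measure E) S) (hinj : Function.Injective x)
    (hmem : ∀ n, x n ∈ S) {r : ℝ} (hr : r < 2) :
    ∃ᶠ n in atTop, r < meshRatio S (design x n) := by
  by_contra hfreq
  simp only [not_frequently, not_lt] at hfreq
  obtain ⟨N, hN⟩ := eventually_atTop.1 (hfreq.and (eventually_ne_atTop 0))
  have hr₀ : 0 ≤ r := meshRatio_nonneg.trans (hN N le_rfl).1
  have : Nontrivial E := hinj.nontrivial
  refine not_tendsto_natCast_mul_fillDist_design_pow hS hvol hinj
    (tendsto_natCast_mul_pow_of_le_mul (q := r / 2) (N := N) (by positivity) (by linarith)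
      Module.finrank_pos.ne' (fun _ _ => fillDist_nonneg) fun n hn => ?_)
  exact fillDist_design_succ_le hS.isBounded hinj hmem (hN n hn).2 hr₀ (hN (n + 1) (by omega)).1

end MeshRatio

theorem statement0_general
    {E : Type*} [NormedAddCommGroup E] [NormedSpace ℝ E] [FiniteDimensional ℝ E]
    [MeasurableSpace E] [BorelSpace E]
    (S : Set E) (hS : IsCompact S) (hvol : 0 < (Measure.addHaar : Measure E) S)
    (x : ℕ → E) (hinj : Function.Injective x) (hmem : ∀ n, x n ∈ S) :
    (∀ r : ℝ, r < 2 → ∀ n₀ : ℕ, ∃ n, n₀ ≤ n ∧ 2 ≤ n ∧ r < meshRatio S (design x n)) ∧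
    (∀ b : ℝ, (∀ n, 2 ≤ n → meshRatio S (design x n) ≤ b) → 2 ≤ b) := by
  have hfreq (r : ℝ) (hr : r < 2) : ∃ᶠ n in atTop, r < meshRatio S (design x n) :=
    frequently_lt_meshRatio_design hS hvol hinj hmem hr
  refine ⟨fun r hr n₀ => ?_, fun b hb => ?_⟩
  · obtain ⟨n, hn, hlt⟩ := (hfreq r hr).forall_exists_of_atTop (max n₀ 2)
    exact ⟨n, le_of_max_le_left hn, le_of_max_le_right hn, hlt⟩
  · by_contra! hb₂
    obtain ⟨n, hn, hlt⟩ := (hfreq b hb₂).forall_exists_of_atTop 2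
    exact (hb n hn).not_gt hlt

/-- For any sequence of nested designs `design x n = {x 1, …, x n}` in a
compact set `S ⊆ ℝ^d` (a `d`-dimensional real normed space) with positive volume,
`limsup_{n → ∞} MR(Xₙ) ≥ 2` (expressed via the "frequently" characterization), and in
particular the uniformity constant `sup_n MR(Xₙ)` of any point sequence in `S` is at least 2. -/
theorem statement0 {d : ℕ} (hd : 1 ≤ d)
    {E : Type*} [NormedAddCommGroup E] [NormedSpace ℝ E] [FiniteDimensional ℝ E]
    [MeasurableSpace E] [BorelSpace E] (hdim : Module.finrank ℝ E = d)
    (S : Set E) (hS : IsCompact S) (hvol : 0 < (Measure.addHaar : Measure E) S)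
    (x : ℕ → E) (hinj : Function.Injective x) (hmem : ∀ n, x n ∈ S) :
    (∀ r : ℝ, r < 2 → ∀ n₀ : ℕ, ∃ n, n₀ ≤ n ∧ 2 ≤ n ∧ r < meshRatio S (design x n)) ∧
    (∀ b : ℝ, (∀ n, 2 ≤ n → meshRatio S (design x n) ≤ b) → 2 ≤ b) :=
  statement0_general S hS hvol x hinj hmem
end

section
/- Let X = [0,1]^d with the Euclidean norm and β ∈ (0,∞). Let the nested designs X_n be generated by the boundary-phobic greedy algorithm: x_1 ∈ X is arbitrary and, for each n ≥ 1, x_{n+1} ∈ Argmax_{x∈X} D_β(x, X_n, X) where D_β(x, X_n, X) = min{ min_{x_i∈X_n} ‖x − x_i‖, β·d(x, ∂X) }. Then for every n ≥ 1, min_{x_i∈X_n} ‖x_{n+1} − x_i‖ ≥ CR(X_n)/(1 + √d/β); i.e., the algorithm is an instance of the relaxed greedy-packing algorithm with constant α_n = a = 1/(1 + √d/β). -/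
/-! Let `y` be a point of the cube at distance `r` from the design `Xₖ` and let `c` be the centre.
The point `z = y + t (c - y)`, `0 ≤ t ≤ 1`, is at distance at least `r - t √d / 2` from `Xₖ` and
at least `t / 2` from the boundary. For `t = 2 r / (β + √d)` the criterion at `z`, hence at the
maximiser `x_{k+1}`, is at least `β r / (β + √d)`, so `x_{k+1}` is at distance at least
`r / (1 + √d / β)` from `Xₖ`. If this `t` exceeds `1`, the criterion at `c` is `β / 2`, which forces
the maximiser to be `c` itself, the only point of the cube at distance `1 / 2` from its boundary. -/

open Metric Set MeasureTheory

open AffineMap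

theorem minDist_eq_infDist {E : Type*} [NormedAddCommGroup E] (D : Finset E) (x : E) :
    minDist D x = infDist x D := by
  rw [minDist, sInf_image', infDist_eq_iInf]

noncomputable def boundaryPhobicCrit {E : Type*} [PseudoMetricSpace E] (β : ℝ) (S D : Set E)
    (y : E) : ℝ :=
  min (infDist y D) (β * infDist y (frontier S))

section UnitCube

variable {ι : Type*}

def unitCube (ι : Type*) : Set (EuclideanSpace ℝ ι) := {y | ∀ i, y i ∈ Icc 0 1}

noncomputable def cubeCenter (ι : Type*) : EuclideanSpace ℝ ι := WithLp.toLp 2 fun _ => 1 / 2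

theorem cubeCenter_apply (i : ι) : cubeCenter ι i = 1 / 2 := rfl

theorem cubeCenter_mem_unitCube : cubeCenter ι ∈ unitCube ι := fun i => by
  rw [cubeCenter_apply]
  norm_num

theorem unitCube_eq_preimage :
    unitCube ι = PiLp.homeomorph 2 (fun _ : ι => ℝ) ⁻¹' univ.pi fun _ => Icc 0 1 := by
  ext
  simp only [unitCube, mem_preimage, mem_univ_pi]
  rfl

theorem isClosed_unitCube : IsClosed (unitCube ι) := by
  rw [unitCube_eq_preimage]
  exact (isClosed_set_pi fun _ _ => isClosed_Icc).preimage (PiLp.homeomorph _ _).continuous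

theorem lineMap_cubeCenter_apply (y : EuclideanSpace ℝ ι) (t : ℝ) (i : ι) :
    lineMap y (cubeCenter ι) t i = (1 - t) * y i + t / 2 := by
  rw [lineMap_apply_module, PiLp.add_apply, PiLp.smul_apply, PiLp.smul_apply, cubeCenter_apply,
    smul_eq_mul, smul_eq_mul]
  ring

theorem lineMap_cubeCenter_apply_mem_Icc {y : EuclideanSpace ℝ ι} (hy : y ∈ unitCube ι) {t : ℝ}
    (ht₁ : t ≤ 1) (i : ι) : lineMap y (cubeCenter ι) t i ∈ Icc (t / 2) (1 - t / 2) := by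
  rw [lineMap_cubeCenter_apply]
  obtain ⟨hy₀, hy₁⟩ := hy i
  constructor <;> nlinarith

theorem lineMap_cubeCenter_mem_unitCube {y : EuclideanSpace ℝ ι} (hy : y ∈ unitCube ι) {t : ℝ}
    (ht₀ : 0 ≤ t) (ht₁ : t ≤ 1) : lineMap y (cubeCenter ι) t ∈ unitCube ι := fun i => by
  obtain ⟨h₀, h₁⟩ := lineMap_cubeCenter_apply_mem_Icc hy ht₁ i
  constructor <;> linarith

variable [Fintype ι]

theorem dist_le_sqrt_card_mul {x y : EuclideanSpace ℝ ι} {r : ℝ} (hr : 0 ≤ r)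
    (h : ∀ i, |x i - y i| ≤ r) : dist x y ≤ √(Fintype.card ι) * r := by
  calc dist x y = √(∑ i, dist (x i) (y i) ^ 2) := EuclideanSpace.dist_eq x y
    _ ≤ √(∑ _i : ι, r ^ 2) := by
      gcongr with i
      rw [Real.dist_eq]
      exact h i
    _ = √(Fintype.card ι) * r := by
      rw [Finset.sum_const, Finset.card_univ, nsmul_eq_mul, Real.sqrt_mul (Nat.cast_nonneg _),
        Real.sqrt_sq hr]

theorem dist_cubeCenter_le {y : EuclideanSpace ℝ ι} (hy : y ∈ unitCube ι) :
    dist y (cubeCenter ι) ≤ √(Fintype.card ι) / 2 := by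
  rw [div_eq_mul_one_div]
  refine dist_le_sqrt_card_mul (by norm_num) fun i => ?_
  obtain ⟨hy₀, hy₁⟩ := hy i
  rw [cubeCenter_apply, abs_le]
  constructor <;> linarith

theorem sub_le_infDist_lineMap_cubeCenter {D : Set (EuclideanSpace ℝ ι)}
    {y : EuclideanSpace ℝ ι} (hy : y ∈ unitCube ι) {t : ℝ} (ht₀ : 0 ≤ t) :
    infDist y D - t * (√(Fintype.card ι) / 2) ≤ infDist (lineMap y (cubeCenter ι) t) D := by
  have hdist : dist y (lineMap y (cubeCenter ι) t) ≤ t * (√(Fintype.card ι) / 2) := by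
    rw [dist_comm, dist_lineMap_left, Real.norm_of_nonneg ht₀]
    exact mul_le_mul_of_nonneg_left (dist_cubeCenter_le hy) ht₀
  linarith [infDist_le_infDist_add_dist (s := D) (x := y) (y := lineMap y (cubeCenter ι) t)]

theorem interior_unitCube : interior (unitCube ι) = {y | ∀ i, y i ∈ Ioo 0 1} := by
  rw [unitCube_eq_preimage, ← Homeomorph.preimage_interior, interior_pi_set finite_univ]
  ext
  simp only [interior_Icc, mem_preimage, mem_univ_pi]
  rfl

theorem mem_frontier_unitCube {p : EuclideanSpace ℝ ι} :
    p ∈ frontier (unitCube ι) ↔ p ∈ unitCube ι ∧ ∃ i, p i ∉ Ioo 0 1 := by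
  rw [isClosed_unitCube.frontier_eq, interior_unitCube]
  simp only [mem_sdiff, mem_ofPred_eq, not_forall]

theorem frontier_unitCube_nonempty [Nonempty ι] : (frontier (unitCube ι)).Nonempty := by
  refine nonempty_frontier_iff.2 ⟨⟨_, cubeCenter_mem_unitCube⟩, fun h => ?_⟩
  have h2 : (WithLp.toLp 2 fun _ => 2 : EuclideanSpace ℝ ι) ∈ unitCube ι := h ▸ mem_univ _
  obtain ⟨-, h⟩ := h2 (Classical.arbitrary ι)
  norm_num at h

theorem le_infDist_frontier_unitCube [Nonempty ι] {z : EuclideanSpace ℝ ι} {u : ℝ}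
    (hz : ∀ i, z i ∈ Icc u (1 - u)) : u ≤ infDist z (frontier (unitCube ι)) := by
  refine (le_infDist frontier_unitCube_nonempty).2 fun p hp => ?_
  obtain ⟨-, i, hpi⟩ := mem_frontier_unitCube.1 hp
  obtain ⟨hz₀, hz₁⟩ := hz i
  refine le_trans ?_ (PiLp.dist_apply_le z p i)
  rw [Real.dist_eq, le_abs]
  rw [mem_Ioo, not_and_or, not_lt, not_lt] at hpi
  rcases hpi with hpi | hpi
  · left; linarith
  · right; linarith

theorem half_le_infDist_frontier_lineMap_cubeCenter [Nonempty ι] {y : EuclideanSpace ℝ ι}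
    (hy : y ∈ unitCube ι) {t : ℝ} (ht₁ : t ≤ 1) :
    t / 2 ≤ infDist (lineMap y (cubeCenter ι) t) (frontier (unitCube ι)) :=
  le_infDist_frontier_unitCube (lineMap_cubeCenter_apply_mem_Icc hy ht₁)

theorem infDist_frontier_unitCube_le_abs [DecidableEq ι] {x : EuclideanSpace ℝ ι}
    (hx : x ∈ unitCube ι) {i : ι} {a : ℝ} (ha : x i + a = 0 ∨ x i + a = 1) :
    infDist x (frontier (unitCube ι)) ≤ |a| := by
  set p := x + PiLp.single 2 i a
  have hp_apply : ∀ j, p j = x j + if j = i then a else 0 := fun j => by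
    simp [p, PiLp.single_apply]
  have hp : p ∈ frontier (unitCube ι) := by
    refine mem_frontier_unitCube.2 ⟨fun j => ?_, i, ?_⟩
    · rw [hp_apply]
      split_ifs with hj
      · subst hj; rcases ha with ha | ha <;> simp [ha]
      · simpa using hx j
    · rw [hp_apply, if_pos rfl]
      rcases ha with ha | ha <;> simp [ha]
  calc infDist x (frontier (unitCube ι)) ≤ dist x p := infDist_le_dist_of_mem hp
    _ = |a| := by
      rw [dist_eq_norm, show x - p = -PiLp.single 2 i a by simp [p], norm_neg, PiLp.norm_single,
        Real.norm_eq_abs]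

theorem eq_cubeCenter_of_half_le_infDist_frontier {x : EuclideanSpace ℝ ι}
    (hx : x ∈ unitCube ι) (h : 1 / 2 ≤ infDist x (frontier (unitCube ι))) : x = cubeCenter ι := by
  classical
  ext i
  have h₀ := infDist_frontier_unitCube_le_abs hx (a := -x i) (i := i) (Or.inl (by ring))
  have h₁ := infDist_frontier_unitCube_le_abs hx (a := 1 - x i) (i := i) (Or.inr (by ring))
  obtain ⟨hx₀, hx₁⟩ := hx i
  rw [abs_neg, abs_of_nonneg hx₀] at h₀
  rw [abs_of_nonneg (by linarith)] at h₁
  rw [cubeCenter_apply]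
  linarith

theorem infDist_le_of_isMaxOn_boundaryPhobicCrit [Nonempty ι] {β : ℝ} (hβ : 0 < β)
    {D : Set (EuclideanSpace ℝ ι)} {y w : EuclideanSpace ℝ ι} (hy : y ∈ unitCube ι)
    (hw : w ∈ unitCube ι) (hmax : IsMaxOn (boundaryPhobicCrit β (unitCube ι) D) (unitCube ι) w) :
    infDist y D ≤ (1 + √(Fintype.card ι) / β) * infDist w D := by
  set q := √(Fintype.card ι)
  set r := infDist y D
  set s := r / (β + q)
  have hβq : 0 < β + q := by positivity
  have hr : r = β * s + q * s := by rw [← add_mul, mul_div_cancel₀ _ hβq.ne']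
  suffices key : β * s ≤ infDist w D by
    calc r = (1 + q / β) * (β * s) := by rw [hr]; field_simp
      _ ≤ (1 + q / β) * infDist w D := by gcongr
  have hle_w := isMaxOn_iff.1 hmax
  by_cases hs : 2 * s ≤ 1
  · have hs₀ : 0 ≤ s := div_nonneg infDist_nonneg hβq.le
    have h₁ : r - 2 * s * (q / 2) ≤ infDist (lineMap y (cubeCenter ι) (2 * s)) D :=
      sub_le_infDist_lineMap_cubeCenter hy (by positivity)
    have h₂ := half_le_infDist_frontier_lineMap_cubeCenter hy hs
    calc β * s ≤ boundaryPhobicCrit β (unitCube ι) D (lineMap y (cubeCenter ι) (2 * s)) :=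
          le_min (by linarith) (by nlinarith)
      _ ≤ boundaryPhobicCrit β (unitCube ι) D w :=
          hle_w _ (lineMap_cubeCenter_mem_unitCube hy (by positivity) hs)
      _ ≤ infDist w D := min_le_left _ _
  · push Not at hs
    have hc : r - q / 2 ≤ infDist (cubeCenter ι) D := by
      have := sub_le_infDist_lineMap_cubeCenter (D := D) hy zero_le_one
      rwa [lineMap_apply_one, one_mul] at this
    have hc_front : 1 / 2 ≤ infDist (cubeCenter ι) (frontier (unitCube ι)) := by
      simpa using half_le_infDist_frontier_lineMap_cubeCenter cubeCenter_mem_unitCube le_rfl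
    have hw_crit : β * (1 / 2) ≤ boundaryPhobicCrit β (unitCube ι) D w :=
      (le_min (by nlinarith) (by gcongr)).trans (hle_w _ cubeCenter_mem_unitCube)
    have hw_center : w = cubeCenter ι := eq_cubeCenter_of_half_le_infDist_frontier hw
      (le_of_mul_le_mul_left (hw_crit.trans (min_le_right _ _)) hβ)
    have hq : 0 ≤ q := Real.sqrt_nonneg _
    rw [hw_center]
    nlinarith

end UnitCube

theorem statement14_general {d : ℕ} (hd : 1 ≤ d) (β : ℝ) (hβ : 0 < β)
    (S : Set (EuclideanSpace ℝ (Fin d)))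
    (hScube : S = {y : EuclideanSpace ℝ (Fin d) | ∀ i, y i ∈ Set.Icc (0 : ℝ) 1})
    (x : ℕ → EuclideanSpace ℝ (Fin d))
    (hphobic : ∀ k : ℕ, 1 ≤ k → x k ∈ S ∧ ∀ y ∈ S,
      min (minDist (design x k) y) (β * Metric.infDist y (frontier S)) ≤
        min (minDist (design x k) (x k)) (β * Metric.infDist (x k) (frontier S))) :
    ∀ k : ℕ, 1 ≤ k →
      fillDist S (design x k) / (1 + Real.sqrt d / β) ≤ minDist (design x k) (x k) := by
  subst hScube
  have : Nonempty (Fin d) := ⟨⟨0, hd⟩⟩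
  intro k hk
  obtain ⟨hxk, hmax⟩ := hphobic k hk
  simp only [fillDist, minDist_eq_infDist] at hmax ⊢
  rw [div_le_iff₀ (by positivity), mul_comm]
  refine Real.sSup_le ?_ (mul_nonneg (by positivity) infDist_nonneg)
  rintro _ ⟨y, hy, rfl⟩
  simpa only [Fintype.card_fin] using
    infDist_le_of_isMaxOn_boundaryPhobicCrit hβ hy hxk (isMaxOn_iff.2 hmax)

/-- Let `S = [0,1]^d` with the Euclidean norm and `β ∈ (0,∞)`. If the
nested designs `Xₙ` are generated by the boundary-phobic greedy algorithm (the `(k+1)`-th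
point `x k ∈ S` maximizes over `S` the criterion
`D_β(y) = min{min_{x_i ∈ X_k} ‖y − x_i‖, β·d(y, ∂S)}`), then for every `k ≥ 1`,
`min_{x_i ∈ X_k} ‖x_{k+1} − x_i‖ ≥ CR(X_k)/(1 + √d/β)`: the algorithm is an instance of the
relaxed greedy-packing algorithm with constant `α = a = 1/(1 + √d/β)`. -/
theorem statement14 {d : ℕ} (hd : 1 ≤ d) (β : ℝ) (hβ : 0 < β)
    (S : Set (EuclideanSpace ℝ (Fin d)))
    (hScube : S = {y : EuclideanSpace ℝ (Fin d) | ∀ i, y i ∈ Set.Icc (0 : ℝ) 1})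
    (x : ℕ → EuclideanSpace ℝ (Fin d)) (hinj : Function.Injective x) (hx0 : x 0 ∈ S)
    (hphobic : ∀ k : ℕ, 1 ≤ k → x k ∈ S ∧ ∀ y ∈ S,
      min (minDist (design x k) y) (β * Metric.infDist y (frontier S)) ≤
        min (minDist (design x k) (x k)) (β * Metric.infDist (x k) (frontier S))) :
    ∀ k : ℕ, 1 ≤ k →
      fillDist S (design x k) / (1 + Real.sqrt d / β) ≤ minDist (design x k) (x k) :=
  statement14_general hd β hβ S hScube x hphobic
end
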